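/- Let n = 2 and f = a·m_3 + b·m_{21} = a(x_1³+x_2³) + b(x_1²x_2 + x_1 x_2²) with f ≠ 0 and (a,b) not proportional to (1,3) (i.e., f not a scalar multiple of (x_1+x_2)³). Then f is a 2-exception if and only if b = 0 or b = 3a. -/

import Mathlib

open MvPolynomial

/-- `E^{(2)}(f) = Σ_j x_j ∂²f/∂x_j²`. -/
noncomputable def polarE2 (n : ℕ) (f : MvPolynomial (Fin n) ℝ) : MvPolynomial (Fin n) ℝ :=
  ∑ j : Fin n, X j * pderiv j (pderiv j f)

/-- The span of the first-order partial derivatives of `f` together with `E^{(2)}(f)`. -/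
noncomputable def exceptionSpan (n : ℕ) (f : MvPolynomial (Fin n) ℝ) :
    Submodule ℝ (MvPolynomial (Fin n) ℝ) :=
  Submodule.span ℝ (Set.range (fun j : Fin n => pderiv j f) ∪ {polarE2 n f})

/-- `f` is an `n`-exception if the span of `∂f/∂x_1, …, ∂f/∂x_n, E^{(2)}(f)`
has dimension exactly `n`. -/
def IsException (n : ℕ) (f : MvPolynomial (Fin n) ℝ) : Prop :=
  Module.finrank ℝ (exceptionSpan n f) = n

/-- The monomial symmetric polynomial `m_3 = Σ_j x_j³`. -/
noncomputable def msym3 (n : ℕ) : MvPolynomial (Fin n) ℝ := ∑ j : Fin n, X j ^ 3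

/-- The monomial symmetric polynomial `m_{21} = Σ_{i ≠ j} x_i² x_j`. -/
noncomputable def msym21 (n : ℕ) : MvPolynomial (Fin n) ℝ :=
  ∑ i : Fin n, ∑ j : Fin n, if i = j then 0 else X i ^ 2 * X j

/-- The monomial symmetric polynomial `m_{111} = Σ_{i < j < k} x_i x_j x_k`. -/
noncomputable def msym111 (n : ℕ) : MvPolynomial (Fin n) ℝ :=
  ∑ s ∈ Finset.univ.powersetCard 3, ∏ a ∈ s, X a

/-!
The partial derivatives of `f = a m₃ + b m₂₁` and `E⁽²⁾(f)` are binary quadratic forms. Evaluating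
at `(1, 0)`, `(0, 1)`, `(1, 1)` turns them into the rows of a `3 × 3` matrix of determinant
`-4b(b - 3a)²`, so they are linearly independent unless `b = 0` or `b = 3a`. For `b = 0` one has
`∂₁f = 3a x₁²`, `∂₂f = 3a x₂²` and `E⁽²⁾(f) = 2(∂₁f + ∂₂f)`, so the span is `2`-dimensional
as soon as `f ≠ 0`.
-/

namespace MvPolynomial

@[simp]
lemma pderiv_ofNat {σ R : Type*} [CommSemiring R] (i : σ) (n : ℕ) [n.AtLeastTwo] :
    pderiv i (no_index (OfNat.ofNat n) : MvPolynomial σ R) = 0 :=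
  (pderiv i).map_natCast n

end MvPolynomial

lemma finrank_span_eq_two_of_mem_span_pair {K V : Type*} [DivisionRing K] [AddCommGroup V]
    [Module K V] {u v w : V} (huv : LinearIndependent K ![u, v]) (hw : w ∈ Submodule.span K {u, v}) :
    Module.finrank K (Submodule.span K (Set.range ![u, v, w])) = 2 := by
  have hrange : Set.range ![u, v, w] = insert w (Set.range ![u, v]) := by
    simp [Matrix.range_cons, Set.insert_comm]
  rw [hrange, Submodule.span_insert_eq_span (by rwa [Matrix.range_cons_cons_empty]),
    finrank_span_eq_card huv, Fintype.card_fin]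

lemma exceptionSpan_two (f : MvPolynomial (Fin 2) ℝ) :
    exceptionSpan 2 f = Submodule.span ℝ (Set.range ![pderiv 0 f, pderiv 1 f, polarE2 2 f]) := by
  have hpartials : (fun j : Fin 2 => pderiv j f) = ![pderiv 0 f, pderiv 1 f] := by
    ext j
    fin_cases j <;> rfl
  rw [exceptionSpan, hpartials, Matrix.range_cons_cons_empty, Matrix.range_cons,
    Matrix.range_cons_cons_empty, Set.insert_union, Set.singleton_union, Set.singleton_union]

namespace SymCubic

noncomputable def symCubic (a b : ℝ) : MvPolynomial (Fin 2) ℝ := a • msym3 2 + b • msym21 2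

noncomputable def binaryQuadratic (c₀ c₁ c₂ : ℝ) : MvPolynomial (Fin 2) ℝ :=
  C c₀ * X 0 ^ 2 + C c₁ * (X 0 * X 1) + C c₂ * X 1 ^ 2

lemma pderiv_zero_symCubic (a b : ℝ) :
    pderiv 0 (symCubic a b) = binaryQuadratic (3 * a) (2 * b) b := by
  simp [symCubic, binaryQuadratic, msym3, msym21, Fin.sum_univ_two, pderiv_X,
    smul_eq_C_mul, map_ofNat]
  ring

lemma pderiv_one_symCubic (a b : ℝ) :
    pderiv 1 (symCubic a b) = binaryQuadratic b (2 * b) (3 * a) := by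
  simp [symCubic, binaryQuadratic, msym3, msym21, Fin.sum_univ_two, pderiv_X,
    smul_eq_C_mul, map_ofNat]
  ring

lemma polarE2_symCubic (a b : ℝ) :
    polarE2 2 (symCubic a b) = binaryQuadratic (6 * a) (4 * b) (6 * a) := by
  simp [polarE2, symCubic, binaryQuadratic, msym3, msym21, Fin.sum_univ_two, pderiv_X,
    smul_eq_C_mul, map_ofNat]
  ring

/-- A binary quadratic form is determined by its values at `(1, 0)`, `(0, 1)` and `(1, 1)`. -/
noncomputable def evalAtThreePoints : MvPolynomial (Fin 2) ℝ →ₗ[ℝ] Fin 3 → ℝ :=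
  LinearMap.pi fun k => (aeval (![![1, 0], ![0, 1], ![1, 1]] k)).toLinearMap

lemma evalAtThreePoints_binaryQuadratic (c₀ c₁ c₂ : ℝ) :
    evalAtThreePoints (binaryQuadratic c₀ c₁ c₂) = ![c₀, c₂, c₀ + c₁ + c₂] := by
  ext k
  fin_cases k <;> simp [evalAtThreePoints, binaryQuadratic]

lemma linearIndependent_pderiv_polarE2_symCubic {a b : ℝ} (hb : b ≠ 0) (hab : b ≠ 3 * a) :
    LinearIndependent ℝ ![pderiv 0 (symCubic a b), pderiv 1 (symCubic a b),
      polarE2 2 (symCubic a b)] := by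
  let M : Matrix (Fin 3) (Fin 3) ℝ :=
    !![3 * a, b, 3 * a + 3 * b; b, 3 * a, 3 * a + 3 * b; 6 * a, 6 * a, 12 * a + 4 * b]
  have hM : evalAtThreePoints ∘ ![pderiv 0 (symCubic a b), pderiv 1 (symCubic a b),
      polarE2 2 (symCubic a b)] = fun i => M i := by
    ext i j
    fin_cases i <;> fin_cases j <;>
      simp [M, pderiv_zero_symCubic, pderiv_one_symCubic, polarE2_symCubic,
        evalAtThreePoints_binaryQuadratic] <;> ring
  have hdet : M.det = -4 * b * (b - 3 * a) ^ 2 := by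
    simp [M, Matrix.det_fin_three]
    ring
  apply LinearIndependent.of_comp evalAtThreePoints
  rw [hM]
  apply Matrix.linearIndependent_rows_of_det_ne_zero
  simp [hdet, hb, sub_eq_zero, hab]

lemma finrank_exceptionSpan_symCubic {a b : ℝ} (hb : b ≠ 0) (hab : b ≠ 3 * a) :
    Module.finrank ℝ (exceptionSpan 2 (symCubic a b)) = 3 := by
  rw [exceptionSpan_two, finrank_span_eq_card (linearIndependent_pderiv_polarE2_symCubic hb hab),
    Fintype.card_fin]

lemma isException_symCubic_zero {a : ℝ} (ha : a ≠ 0) : IsException 2 (symCubic a 0) := by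
  rw [IsException, exceptionSpan_two]
  apply finrank_span_eq_two_of_mem_span_pair
  · rw [LinearIndependent.pair_iff]
    intro s t hst
    have hvals := congrArg evalAtThreePoints hst
    simp only [map_add, map_smul, map_zero, pderiv_zero_symCubic, pderiv_one_symCubic,
      evalAtThreePoints_binaryQuadratic] at hvals
    have hs : s * (3 * a) = 0 := by simpa using congrFun hvals 0
    have ht : t * (3 * a) = 0 := by simpa using congrFun hvals 1
    exact ⟨by simpa [ha] using hs, by simpa [ha] using ht⟩
  · refine Submodule.mem_span_pair.2 ⟨2, 2, ?_⟩
    rw [pderiv_zero_symCubic, pderiv_one_symCubic, polarE2_symCubic]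
    simp only [binaryQuadratic, smul_eq_C_mul, map_mul, map_zero, map_ofNat]
    ring

end SymCubic

/-- For `n = 2` and `f = a·m_3 + b·m_{21}` nonzero and not a scalar multiple of
`(x_1+x_2)³`, `f` is a `2`-exception iff `b = 0` or `b = 3a`. -/
theorem isException_iff_degree_three_two_vars (a b : ℝ)
    (hf : a • msym3 2 + b • msym21 2 ≠ 0)
    (hprop : ¬ ∃ t : ℝ, a = t ∧ b = 3 * t) :
    IsException 2 (a • msym3 2 + b • msym21 2) ↔ b = 0 ∨ b = 3 * a := by
  have hab : b ≠ 3 * a := fun h => hprop ⟨a, rfl, h⟩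
  rw [or_iff_left hab]
  constructor
  · intro hexc
    by_contra hb
    have hrank : (2 : ℕ) = 3 := hexc.symm.trans (SymCubic.finrank_exceptionSpan_symCubic hb hab)
    omega
  · rintro rfl
    have ha : a ≠ 0 := by
      rintro rfl
      simp at hf
    exact SymCubic.isException_symCubic_zero ha
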